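/- arXiv:1508.01264 — 5 statements merged into one kernel-verified Lean document; each statement's English description precedes it below -/
import Mathlib

section
/- For every real 0 ≤ p ≤ 1 and positive integers s, t, the SNB probability masses sum to one: ∑_{k=s}^{s+t-1} C(k-1, s-1) p^s (1-p)^{k-s} + ∑_{k=t}^{s+t-1} C(k-1, t-1) p^{k-t} (1-p)^t = 1. -/
open Finset

private lemma snb_key (p : ℝ) (a : ℕ) : ∀ b : ℕ,
    (∑ j ∈ Finset.range (b+1), ((a+j).choose j : ℝ) * p^(a+1) * (1-p)^j)
  + (∑ i ∈ Finset.range (a+1), ((b+i).choose i : ℝ) * p^i * (1-p)^(b+1)) = 1 := by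
  intro b
  induction b with
  | zero =>
      simp only [zero_add, Finset.sum_range_one, Nat.add_zero, Nat.choose_self,
        Nat.choose_zero_right, Nat.cast_one, one_mul, pow_zero, mul_one, pow_one]
      rw [← Finset.sum_mul]
      linear_combination (-1 : ℝ) * geom_sum_mul p (a+1)
  | succ b ih =>
      rw [Finset.sum_range_succ]
      set f : ℕ → ℝ := fun i => (((b+i+1).choose i : ℝ) - ((b+i).choose i)) * p^i with hf
      have h1 : (∑ i ∈ Finset.range (a+1), ((b+1+i).choose i : ℝ) * p^i * (1-p)^(b+1+1))
          = (∑ i ∈ Finset.range (a+1), (((b+i).choose i : ℝ) * p^i * (1-p)^(b+1)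
              - (1-p)^(b+1) * (f (i+1) - f i))) := by
        refine Finset.sum_congr rfl fun i _ => ?_
        have hp1 : ((b+(i+1)+1).choose (i+1) : ℝ) = ((b+i+1).choose i : ℝ) + ((b+i+1).choose (i+1)) := by
          have : b+(i+1)+1 = (b+i+1)+1 := by ring
          rw [this, Nat.choose_succ_succ' (b+i+1) i]
          push_cast; ring
        have hbi : b+1+i = b+i+1 := by ring
        simp only [hf]
        rw [hbi, hp1]
        ring
      rw [h1, Finset.sum_sub_distrib, ← Finset.mul_sum, Finset.sum_range_sub f (a+1)]
      have h2 : f (a+1) = ((a+(b+1)).choose (b+1) : ℝ) * p^(a+1) := by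
        have hsym : (b+a+1).choose a = (a+(b+1)).choose (b+1) := by
          have h := Nat.choose_symm (n := b+a+1) (k := b+1) (by omega)
          have he : b+a+1-(b+1) = a := by omega
          rw [he] at h
          have e : a+(b+1) = b+a+1 := by omega
          rw [e]; exact h
        have hnat : (b+(a+1)+1).choose (a+1)
            = (a+(b+1)).choose (b+1) + (b+(a+1)).choose (a+1) := by
          have e1 : b+(a+1)+1 = (b+a+1)+1 := by omega
          have e2 : b+(a+1) = b+a+1 := by omega
          rw [e1, e2, Nat.choose_succ_succ' (b+a+1) a, hsym]
        simp only [hf]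
        push_cast [hnat]
        ring
      have h0 : f 0 = 0 := by simp [hf]
      rw [h2, h0]
      linear_combination ih

/-- The stopped negative binomial SNB(p, s, t) probability masses sum to one. -/
theorem snb_pmf_sums_to_one (p : ℝ) (hp0 : 0 ≤ p) (hp1 : p ≤ 1)
    (s t : ℕ) (hs : 0 < s) (ht : 0 < t) :
    (∑ k ∈ Finset.Icc s (s + t - 1),
        (Nat.choose (k - 1) (s - 1) : ℝ) * p ^ s * (1 - p) ^ (k - s)) +
    (∑ k ∈ Finset.Icc t (s + t - 1),
        (Nat.choose (k - 1) (t - 1) : ℝ) * p ^ (k - t) * (1 - p) ^ t) = 1 := by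
  obtain ⟨a, rfl⟩ : ∃ a, s = a + 1 := ⟨s - 1, by omega⟩
  obtain ⟨b, rfl⟩ : ∃ b, t = b + 1 := ⟨t - 1, by omega⟩
  have key := snb_key p a b
  have e1 : (∑ k ∈ Finset.Icc (a+1) (a+1 + (b+1) - 1),
        (Nat.choose (k - 1) (a+1 - 1) : ℝ) * p ^ (a+1) * (1 - p) ^ (k - (a+1)))
      = ∑ j ∈ Finset.range (b+1), ((a+j).choose j : ℝ) * p^(a+1) * (1-p)^j := by
    rw [← Finset.Ico_add_one_right_eq_Icc, Finset.sum_Ico_eq_sum_range]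
    have hn : a+1+(b+1)-1+1-(a+1) = b+1 := by omega
    rw [hn]
    refine Finset.sum_congr rfl fun j _ => ?_
    have h1 : a+1+j-1 = a+j := by omega
    have h2 : a+1-1 = a := by omega
    have h3 : a+1+j-(a+1) = j := by omega
    rw [h1, h2, h3]
    have h := Nat.choose_symm (Nat.le_add_right a j)
    rw [Nat.add_sub_cancel_left] at h
    rw [← h]
  have e2 : (∑ k ∈ Finset.Icc (b+1) (a+1 + (b+1) - 1),
        (Nat.choose (k - 1) (b+1 - 1) : ℝ) * p ^ (k - (b+1)) * (1 - p) ^ (b+1))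
      = ∑ i ∈ Finset.range (a+1), ((b+i).choose i : ℝ) * p^i * (1-p)^(b+1) := by
    rw [← Finset.Ico_add_one_right_eq_Icc, Finset.sum_Ico_eq_sum_range]
    have hn : a+1+(b+1)-1+1-(b+1) = a+1 := by omega
    rw [hn]
    refine Finset.sum_congr rfl fun i _ => ?_
    have h1 : b+1+i-1 = b+i := by omega
    have h2 : b+1-1 = b := by omega
    have h3 : b+1+i-(b+1) = i := by omega
    rw [h1, h2, h3]
    have h := Nat.choose_symm (Nat.le_add_right b i)
    rw [Nat.add_sub_cancel_left] at h
    rw [← h]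
  rw [e1, e2, key]
end

section
/- Let 0 ≤ p ≤ 1 and let s, t be positive integers. Let μ be the infinite product of Bernoulli(p) measures on sequences ω : ℕ → {0,1}, and define the stopping time Y(ω) as the smallest n such that either ∑_{i<n} ω_i = s or ∑_{i<n} (1 - ω_i) = t. Then for every integer k, μ{ω : Y(ω) = k} = C(k-1, s-1) p^s (1-p)^{k-s} · 1{s ≤ k ≤ s+t-1} + C(k-1, t-1) p^{k-t} (1-p)^t · 1{t ≤ k ≤ s+t-1}. -/
open MeasureTheory

/-- Number of successes (coordinates equal to 1/true) among the first `n` coordinates. -/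
def numSuccesses (ω : ℕ → Bool) (n : ℕ) : ℕ :=
  ((Finset.range n).filter fun i => ω i = true).card

/-- Number of failures (coordinates equal to 0/false) among the first `n` coordinates. -/
def numFailures (ω : ℕ → Bool) (n : ℕ) : ℕ :=
  ((Finset.range n).filter fun i => ω i = false).card

/-- The stopping time: the smallest `n` such that among the first `n` coordinates
there are either `s` successes or `t` failures. -/
noncomputable def snbStop (s t : ℕ) (ω : ℕ → Bool) : ℕ :=
  sInf {n | numSuccesses ω n = s ∨ numFailures ω n = t}

/-!
A run stops at time `k` through its `s`-th success exactly when the `k`-th trial `ω (k - 1)` is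
a success, the first `k` trials contain `s` successes and fewer than `t` failures, i.e.
`s ≤ k ≤ s + t - 1`. The success sets of such runs are `{k - 1} ∪ T` with `T` an
`(s - 1)`-subset of the first `k - 1` trials, so there are `C(k - 1, s - 1)` of them, each a
cylinder of probability `p ^ s (1 - p) ^ (k - s)`. Stopping through the `t`-th failure is the
same event for the flipped sequence `fun i => !ω i`, which is Bernoulli(1 - p), and the two ways
of stopping are disjoint.
-/

open Finset

theorem lt_of_forall_ne_of_le_succ {f : ℕ → ℕ} (hf₀ : f 0 = 0) (hf : ∀ j, f (j + 1) ≤ f j + 1)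
    {c n : ℕ} (hne : ∀ j ≤ n, f j ≠ c) : f n < c := by
  induction n with
  | zero => have := hne 0 le_rfl; omega
  | succ n ih =>
    have := hf n
    have := ih fun j hj => hne j (by omega)
    have := hne (n + 1) le_rfl
    omega

section Counts

variable (ω : ℕ → Bool) (n : ℕ)

def successes : Finset ℕ := (range n).filter fun i => ω i = true

theorem numSuccesses_eq_card_successes : numSuccesses ω n = #(successes ω n) := rfl

theorem successes_subset_range : successes ω n ⊆ range n := filter_subset _ _

theorem mem_successes {i : ℕ} : i ∈ successes ω n ↔ i < n ∧ ω i = true := by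
  simp [successes]

theorem numSuccesses_not : numSuccesses (fun i => !ω i) n = numFailures ω n := by
  simp [numSuccesses, numFailures]

theorem numFailures_not : numFailures (fun i => !ω i) n = numSuccesses ω n := by
  simp [numSuccesses, numFailures]

@[simp]
theorem numSuccesses_zero : numSuccesses ω 0 = 0 := rfl

theorem numSuccesses_succ :
    numSuccesses ω (n + 1) = numSuccesses ω n + if ω n then 1 else 0 := by
  simp only [numSuccesses, range_add_one, filter_insert]
  split_ifs
  · rw [card_insert_of_notMem (by simp)]
  · rfl

theorem numFailures_succ :
    numFailures ω (n + 1) = numFailures ω n + if ω n then 0 else 1 := by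
  rw [← numSuccesses_not, numSuccesses_succ, numSuccesses_not]
  cases ω n <;> rfl

theorem monotone_numSuccesses : Monotone (numSuccesses ω) :=
  monotone_nat_of_le_succ fun n => by rw [numSuccesses_succ]; omega

theorem monotone_numFailures : Monotone (numFailures ω) :=
  monotone_nat_of_le_succ fun n => by rw [numFailures_succ]; omega

theorem numSuccesses_add_numFailures : numSuccesses ω n + numFailures ω n = n := by
  induction n with
  | zero => rfl
  | succ n ih => rw [numSuccesses_succ, numFailures_succ]; split_ifs <;> omega

theorem numSuccesses_lt_of_forall_ne {c : ℕ} (hne : ∀ j ≤ n, numSuccesses ω j ≠ c) :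
    numSuccesses ω n < c :=
  lt_of_forall_ne_of_le_succ (numSuccesses_zero ω)
    (fun j => by rw [numSuccesses_succ]; split <;> omega) hne

theorem numFailures_lt_of_forall_ne {c : ℕ} (hne : ∀ j ≤ n, numFailures ω j ≠ c) :
    numFailures ω n < c := by
  simpa only [numSuccesses_not] using
    numSuccesses_lt_of_forall_ne (fun i => !ω i) n (by simpa only [numSuccesses_not] using hne)

end Counts

section Stop

variable {s t : ℕ} (ω : ℕ → Bool)

theorem snbStop_not : snbStop t s (fun i => !ω i) = snbStop s t ω := by
  simp only [snbStop, numSuccesses_not, numFailures_not, or_comm]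

theorem snbStop_spec :
    numSuccesses ω (snbStop s t ω) = s ∨ numFailures ω (snbStop s t ω) = t := by
  refine Nat.sInf_mem (s := {n | numSuccesses ω n = s ∨ numFailures ω n = t}) ?_
  by_contra hnever
  simp only [Set.not_nonempty_iff_eq_empty, Set.eq_empty_iff_forall_notMem, Set.mem_ofPred_eq,
    not_or] at hnever
  have hs := numSuccesses_lt_of_forall_ne ω (s + t) fun j _ => (hnever j).1
  have ht := numFailures_lt_of_forall_ne ω (s + t) fun j _ => (hnever j).2
  have := numSuccesses_add_numFailures ω (s + t)
  omega

theorem snbStop_eq_succ_and_numSuccesses_eq_iff {m : ℕ} :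
    snbStop s t ω = m + 1 ∧ numSuccesses ω (m + 1) = s ↔
      ω m = true ∧ numSuccesses ω (m + 1) = s ∧ numFailures ω (m + 1) < t := by
  have hN := numSuccesses_succ ω m
  have hF := numFailures_succ ω m
  constructor
  · rintro ⟨hstop, hs⟩
    have hbefore : ∀ j ≤ m, numSuccesses ω j ≠ s ∧ numFailures ω j ≠ t := fun j hj => by
      simpa [not_or] using
        Nat.notMem_of_lt_sInf (s := {n | numSuccesses ω n = s ∨ numFailures ω n = t})
          (show j < snbStop s t ω by omega)
    have hωm : ω m = true := by
      by_contra h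
      rw [if_neg h, add_zero] at hN
      exact (hbefore m le_rfl).1 (hN ▸ hs)
    have := numFailures_lt_of_forall_ne ω m fun j hj => (hbefore j hj).2
    simp only [hωm, if_true] at hF
    exact ⟨hωm, hs, by omega⟩
  · rintro ⟨hωm, hs, ht⟩
    refine ⟨le_antisymm (Nat.sInf_le (Or.inl hs)) (le_csInf ⟨m + 1, Or.inl hs⟩ ?_), hs⟩
    intro j hj
    by_contra! hjm
    have := monotone_numSuccesses ω (Nat.le_of_lt_succ hjm)
    have := monotone_numFailures ω hjm.le
    simp only [hωm, if_true] at hN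
    rcases hj with hj | hj <;> omega

theorem setOf_snbStop_eq_union (k : ℕ) :
    {ω | snbStop s t ω = k} = {ω | snbStop s t ω = k ∧ numSuccesses ω k = s} ∪
      {ω | snbStop s t ω = k ∧ numFailures ω k = t} := by
  ext ω
  simp only [Set.mem_union, Set.mem_ofPred_eq, ← and_or_left, iff_self_and]
  rintro rfl
  exact snbStop_spec ω

theorem setOf_snbStop_eq_and_numFailures_eq (k : ℕ) :
    {ω | snbStop s t ω = k ∧ numFailures ω k = t} =
      (fun ω i => !ω i) ⁻¹' {ω | snbStop t s ω = k ∧ numSuccesses ω k = t} := by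
  ext ω
  simp [snbStop_not, numSuccesses_not]

end Stop

def IsBernoulliProduct (p : ℝ) (μ : Measure (ℕ → Bool)) : Prop :=
  ∀ (n : ℕ) (b : Fin n → Bool),
    μ {ω | ∀ i : Fin n, ω (i : ℕ) = b i} = ∏ i : Fin n, ENNReal.ofReal (if b i then p else 1 - p)

theorem measurableSet_setOf_forall_eq {n : ℕ} (b : Fin n → Bool) :
    MeasurableSet {ω : ℕ → Bool | ∀ i : Fin n, ω i = b i} := by
  rw [Set.ofPred_forall]
  exact MeasurableSet.iInter fun i => measurableSet_eq_fun (measurable_pi_apply _) measurable_const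

section Cylinders

variable {n : ℕ} {S : Finset ℕ}

theorem setOf_successes_eq (hS : S ⊆ range n) :
    {ω | successes ω n = S} = {ω | ∀ i : Fin n, ω (i : ℕ) = decide ((i : ℕ) ∈ S)} := by
  ext ω
  simp only [Set.mem_ofPred_eq, successes, Finset.ext_iff, mem_filter, mem_range, Fin.forall_iff]
  refine forall_congr' fun a => ?_
  by_cases ha : a < n
  · cases ω a <;> simp [ha]
  · simpa [ha] using fun h => ha (mem_range.1 (hS h))

theorem measurableSet_successes_eq (hS : S ⊆ range n) : MeasurableSet {ω | successes ω n = S} := by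
  rw [setOf_successes_eq hS]
  exact measurableSet_setOf_forall_eq _

theorem measurableSet_successes_mem (𝒮 : Finset (Finset ℕ)) (h𝒮 : ∀ S ∈ 𝒮, S ⊆ range n) :
    MeasurableSet {ω | successes ω n ∈ 𝒮} := by
  change MeasurableSet ((successes · n) ⁻¹' 𝒮)
  rw [← Finset.set_biUnion_preimage_singleton]
  exact 𝒮.measurableSet_biUnion fun S hS => measurableSet_successes_eq (h𝒮 S hS)

variable {q : ℝ} {μ : Measure (ℕ → Bool)}

theorem IsBernoulliProduct.measure_successes_eq (hμ : IsBernoulliProduct q μ) (hq₀ : 0 ≤ q)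
    (hq₁ : q ≤ 1) (hS : S ⊆ range n) :
    μ {ω | successes ω n = S} = ENNReal.ofReal (q ^ #S * (1 - q) ^ (n - #S)) := by
  rw [setOf_successes_eq hS, hμ, ← ENNReal.ofReal_prod_of_nonneg fun i _ => by split <;> linarith,
    Fin.prod_univ_eq_prod_range (fun i => if decide (i ∈ S) then q else 1 - q) n]
  simp only [decide_eq_true_eq]
  rw [prod_ite, prod_const, prod_const, filter_mem_eq_inter, inter_eq_right.2 hS, filter_not,
    filter_mem_eq_inter, inter_eq_right.2 hS, card_sdiff_of_subset hS, card_range]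

theorem IsBernoulliProduct.measure_successes_mem (hμ : IsBernoulliProduct q μ) (hq₀ : 0 ≤ q)
    (hq₁ : q ≤ 1) (𝒮 : Finset (Finset ℕ)) (h𝒮 : ∀ S ∈ 𝒮, S ⊆ range n) :
    μ {ω | successes ω n ∈ 𝒮} = ∑ S ∈ 𝒮, ENNReal.ofReal (q ^ #S * (1 - q) ^ (n - #S)) := by
  change μ ((successes · n) ⁻¹' 𝒮) = _
  rw [← sum_measure_preimage_singleton 𝒮 fun S hS => measurableSet_successes_eq (h𝒮 S hS)]
  exact sum_congr rfl fun S hS => hμ.measure_successes_eq hq₀ hq₁ (h𝒮 S hS)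

end Cylinders

theorem card_filter_mem_powersetCard_range_succ (m r : ℕ) :
    #{S ∈ (range (m + 1)).powersetCard (r + 1) | m ∈ S} = m.choose r := by
  have hm : ∀ {j} (T : Finset ℕ), T ∈ (range m).powersetCard j → m ∉ T := fun _ hT hmT =>
    notMem_range_self ((mem_powersetCard.1 hT).1 hmT)
  rw [range_add_one, powersetCard_succ_insert notMem_range_self, filter_union,
    filter_false_of_mem fun S hS => hm S hS, empty_union, filter_true_of_mem ?_,
    card_image_of_injOn ?_, card_powersetCard, card_range]
  · intro T hT T' hT' h
    rw [← erase_insert (hm T hT), ← erase_insert (hm T' hT')]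
    exact congrArg (erase · m) h
  · simp only [mem_image]
    rintro _ ⟨T, -, rfl⟩
    exact mem_insert_self m T

def stopSuccessSets (s t k : ℕ) : Finset (Finset ℕ) :=
  if s ≤ k ∧ k ≤ s + t - 1 then {S ∈ (range k).powersetCard s | k - 1 ∈ S} else ∅

section StopSuccessSets

variable {s t : ℕ}

theorem stopSuccessSets_subset_powersetCard (k : ℕ) :
    stopSuccessSets s t k ⊆ (range k).powersetCard s := by
  unfold stopSuccessSets
  split_ifs
  · exact filter_subset _ _
  · exact empty_subset _

theorem card_stopSuccessSets (hs : 0 < s) (k : ℕ) :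
    #(stopSuccessSets s t k) = if s ≤ k ∧ k ≤ s + t - 1 then (k - 1).choose (s - 1) else 0 := by
  unfold stopSuccessSets
  split_ifs with h
  · obtain ⟨m, rfl⟩ : ∃ m, k = m + 1 := ⟨k - 1, by omega⟩
    obtain ⟨r, rfl⟩ : ∃ r, s = r + 1 := ⟨s - 1, by omega⟩
    exact card_filter_mem_powersetCard_range_succ m r
  · rfl

theorem numFailures_lt_of_snbStop_eq (hs : 0 < s) {ω : ℕ → Bool} {k : ℕ}
    (hstop : snbStop s t ω = k) (hsucc : numSuccesses ω k = s) : numFailures ω k < t := by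
  cases k with
  | zero => exact absurd hsucc hs.ne
  | succ m => exact ((snbStop_eq_succ_and_numSuccesses_eq_iff ω).1 ⟨hstop, hsucc⟩).2.2

theorem setOf_snbStop_eq_and_numSuccesses_eq (hs : 0 < s) (k : ℕ) :
    {ω | snbStop s t ω = k ∧ numSuccesses ω k = s} =
      {ω | successes ω k ∈ stopSuccessSets s t k} := by
  ext ω
  simp only [Set.mem_ofPred_eq, stopSuccessSets]
  cases k with
  | zero => simp [hs.ne', eq_comm (a := 0)]
  | succ m =>
    rw [snbStop_eq_succ_and_numSuccesses_eq_iff]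
    have := numSuccesses_add_numFailures ω (m + 1)
    split_ifs with h
    · simp only [mem_filter, mem_powersetCard, successes_subset_range, true_and,
        ← numSuccesses_eq_card_successes, add_tsub_cancel_right, mem_successes, lt_add_one]
      constructor
      · rintro ⟨hω, hN, -⟩
        exact ⟨hN, hω⟩
      · rintro ⟨hN, hω⟩
        exact ⟨hω, hN, by omega⟩
    · simp only [notMem_empty, iff_false]
      rintro ⟨-, hN, hF⟩
      omega

end StopSuccessSets

section Measure

variable {s t : ℕ} {q : ℝ} {μ : Measure (ℕ → Bool)}

theorem measurableSet_snbStop_eq_and_numSuccesses_eq (hs : 0 < s) (k : ℕ) :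
    MeasurableSet {ω | snbStop s t ω = k ∧ numSuccesses ω k = s} := by
  rw [setOf_snbStop_eq_and_numSuccesses_eq hs]
  exact measurableSet_successes_mem _ fun S hS =>
    (mem_powersetCard.1 (stopSuccessSets_subset_powersetCard k hS)).1

theorem IsBernoulliProduct.measure_snbStop_eq_and_numSuccesses_eq (hμ : IsBernoulliProduct q μ)
    (hq₀ : 0 ≤ q) (hq₁ : q ≤ 1) (hs : 0 < s) (k : ℕ) :
    μ {ω | snbStop s t ω = k ∧ numSuccesses ω k = s} =
      ENNReal.ofReal (if s ≤ k ∧ k ≤ s + t - 1 then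
        ((k - 1).choose (s - 1) : ℝ) * q ^ s * (1 - q) ^ (k - s) else 0) := by
  have hmem S (hS : S ∈ stopSuccessSets s t k) := mem_powersetCard.1
    (stopSuccessSets_subset_powersetCard k hS)
  rw [setOf_snbStop_eq_and_numSuccesses_eq hs, hμ.measure_successes_mem hq₀ hq₁ _
    fun S hS => (hmem S hS).1, sum_congr rfl fun S hS => by rw [(hmem S hS).2], sum_const,
    card_stopSuccessSets hs, nsmul_eq_mul]
  split_ifs
  · rw [mul_assoc, ENNReal.ofReal_mul (Nat.cast_nonneg _), ENNReal.ofReal_natCast]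
  · simp

theorem IsBernoulliProduct.map_not {p : ℝ} (hμ : IsBernoulliProduct p μ) :
    IsBernoulliProduct (1 - p) (μ.map fun ω i => !ω i) := by
  intro n b
  have hpre : (fun (ω : ℕ → Bool) i => !ω i) ⁻¹' {ω | ∀ i : Fin n, ω i = b i} =
      {ω | ∀ i : Fin n, ω i = !b i} := by
    ext ω
    simp [Bool.not_eq_eq_eq_not]
  rw [Measure.map_apply (by fun_prop) (measurableSet_setOf_forall_eq b), hpre, hμ]
  refine prod_congr rfl fun i _ => ?_
  cases b i <;> simp

theorem IsBernoulliProduct.measure_snbStop_eq_and_numFailures_eq (hμ : IsBernoulliProduct q μ)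
    (hq₀ : 0 ≤ q) (hq₁ : q ≤ 1) (ht : 0 < t) (k : ℕ) :
    μ {ω | snbStop s t ω = k ∧ numFailures ω k = t} =
      ENNReal.ofReal (if t ≤ k ∧ k ≤ s + t - 1 then
        ((k - 1).choose (t - 1) : ℝ) * q ^ (k - t) * (1 - q) ^ t else 0) := by
  rw [setOf_snbStop_eq_and_numFailures_eq, ← Measure.map_apply (by fun_prop)
    (measurableSet_snbStop_eq_and_numSuccesses_eq ht k),
    hμ.map_not.measure_snbStop_eq_and_numSuccesses_eq (sub_nonneg.2 hq₁) (by linarith) ht k,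
    sub_sub_cancel, add_comm t s, mul_right_comm]

end Measure

theorem snb_stoppingTime_pmf_general (p : ℝ) (hp0 : 0 ≤ p) (hp1 : p ≤ 1)
    (s t : ℕ) (hs : 0 < s) (ht : 0 < t)
    (μ : Measure (ℕ → Bool))
    (hμ : ∀ (n : ℕ) (b : Fin n → Bool),
      μ {ω | ∀ i : Fin n, ω (i : ℕ) = b i} =
        ∏ i : Fin n, ENNReal.ofReal (if b i then p else 1 - p))
    (k : ℕ) :
    μ {ω | snbStop s t ω = k} =
      ENNReal.ofReal
        ((if s ≤ k ∧ k ≤ s + t - 1 then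
            (Nat.choose (k - 1) (s - 1) : ℝ) * p ^ s * (1 - p) ^ (k - s) else 0) +
         (if t ≤ k ∧ k ≤ s + t - 1 then
            (Nat.choose (k - 1) (t - 1) : ℝ) * p ^ (k - t) * (1 - p) ^ t else 0)) := by
  have hμ : IsBernoulliProduct p μ := hμ
  have hdisj : Disjoint {ω | snbStop s t ω = k ∧ numSuccesses ω k = s}
      {ω | snbStop s t ω = k ∧ numFailures ω k = t} :=
    Set.disjoint_left.2 fun ω ⟨hstop, hsucc⟩ ⟨_, hfail⟩ =>
      (numFailures_lt_of_snbStop_eq hs hstop hsucc).ne hfail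
  have hterm_nonneg {j a b : ℕ} : 0 ≤ (j : ℝ) * p ^ a * (1 - p) ^ b := by
    have := sub_nonneg.2 hp1
    positivity
  rw [setOf_snbStop_eq_union,
    measure_union' hdisj (measurableSet_snbStop_eq_and_numSuccesses_eq hs k),
    hμ.measure_snbStop_eq_and_numSuccesses_eq hp0 hp1 hs k,
    hμ.measure_snbStop_eq_and_numFailures_eq hp0 hp1 ht k,
    ← ENNReal.ofReal_add (by split_ifs <;> simp [hterm_nonneg])
      (by split_ifs <;> simp [hterm_nonneg])]

/-- If `μ` is the infinite product of Bernoulli(p) measures on sequences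
`ω : ℕ → {0,1}` (characterized by its values on cylinder sets), then the stopping
time `Y` of the SNB(p, s, t) process has the stopped negative binomial mass function. -/
theorem snb_stoppingTime_pmf (p : ℝ) (hp0 : 0 ≤ p) (hp1 : p ≤ 1)
    (s t : ℕ) (hs : 0 < s) (ht : 0 < t)
    (μ : Measure (ℕ → Bool)) [IsProbabilityMeasure μ]
    (hμ : ∀ (n : ℕ) (b : Fin n → Bool),
      μ {ω | ∀ i : Fin n, ω (i : ℕ) = b i} =
        ∏ i : Fin n, ENNReal.ofReal (if b i then p else 1 - p))
    (k : ℕ) :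
    μ {ω | snbStop s t ω = k} =
      ENNReal.ofReal
        ((if s ≤ k ∧ k ≤ s + t - 1 then
            (Nat.choose (k - 1) (s - 1) : ℝ) * p ^ s * (1 - p) ^ (k - s) else 0) +
         (if t ≤ k ∧ k ≤ s + t - 1 then
            (Nat.choose (k - 1) (t - 1) : ℝ) * p ^ (k - t) * (1 - p) ^ t else 0)) :=
  snb_stoppingTime_pmf_general p hp0 hp1 s t hs ht μ hμ k
end

section
/- Let 0 ≤ p ≤ 1 and let s, t be positive integers. Let μ be the infinite product of Bernoulli(p) measures on sequences ω : ℕ → {0,1}, and define the stopping time Y(ω) as the smallest n such that either ∑_{i<n} ω_i = s or ∑_{i<n} (1 - ω_i) = t. Fix nonnegative integers s' < s and t' < t with m = s' + t', and let A be the event that among the first m coordinates exactly s' equal 1 (hence exactly t' equal 0). Then for every integer k, the conditional probability μ(Y = m + k | A) equals the SNB(p, s - s', t - t') probability mass at k, namely C(k-1, s-s'-1) p^{s-s'} (1-p)^{k-(s-s')} · 1{s-s' ≤ k ≤ (s-s')+(t-t')-1} + C(k-1, t-t'-1) p^{k-(t-t')} (1-p)^{t-t'} · 1{t-t' ≤ k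 ≤ (s-s')+(t-t')-1}. -/
open MeasureTheory ProbabilityTheory

/-!
Let `Y'` be the stopping time with thresholds `s - s'` and `t - t'`, read off the shifted
sequence `j ↦ ω (m + j)`. On `A` neither threshold has been reached by time `m`, so
`Y = m + k ↔ Y' = k` there. Both `A` and `{Y' = k}` are cylinder events, on the disjoint blocks
of coordinates `[0, m)` and `[m, m + k)`; the product formula for `μ` on cylinders makes such
events independent, so `μ(Y = m + k | A) = μ(Y' = k)`. Finally `Y' = k + 1` happens exactly
when, before coordinate `k`, one side is one short of its threshold (a binomial count) and
coordinate `k` completes it while the total stays below `(s - s') + (t - t')`.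
-/

open Finset
open scoped ENNReal

/-- `numSuccesses` and `numFailures` are definitionally `countBelow true` and `countBelow false`. -/
def countBelow (u : Bool) (ω : ℕ → Bool) (n : ℕ) : ℕ :=
  #{i ∈ range n | ω i = u}

section countBelow

variable (u : Bool) (ω : ℕ → Bool)

@[simp]
lemma countBelow_zero : countBelow u ω 0 = 0 := rfl

lemma countBelow_succ (n : ℕ) :
    countBelow u ω (n + 1) = countBelow u ω n + if ω n = u then 1 else 0 := by
  simp only [countBelow, range_add_one, filter_insert]
  split_ifs with h
  · exact card_insert_of_notMem (by simp)
  · rfl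

lemma countBelow_true_add_false (n : ℕ) : countBelow true ω n + countBelow false ω n = n := by
  induction n with
  | zero => rfl
  | succ n ih => cases h : ω n <;> simp [countBelow_succ, h] <;> omega

lemma countBelow_mono : Monotone (countBelow u ω) :=
  fun _ _ hmn => card_le_card (filter_subset_filter _ (range_subset_range.2 hmn))

lemma countBelow_congr {ω' : ℕ → Bool} {n : ℕ} (h : ∀ i < n, ω i = ω' i) :
    countBelow u ω n = countBelow u ω' n :=
  congrArg card (filter_congr fun i hi => by rw [h i (mem_range.1 hi)])

lemma countBelow_add (m n : ℕ) :
    countBelow u ω (m + n) = countBelow u ω m + countBelow u (fun j => ω (m + j)) n := by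
  induction n with
  | zero => rfl
  | succ n ih => rw [← add_assoc, countBelow_succ, ih, countBelow_succ, add_assoc]

lemma countBelow_lt_of_forall_ne {c n : ℕ} (h : ∀ j ≤ n, countBelow u ω j ≠ c) :
    countBelow u ω n < c := by
  induction n with
  | zero => exact Nat.pos_of_ne_zero (h 0 le_rfl).symm
  | succ n ih =>
    have hn := ih fun j hj => h j (by omega)
    have := h (n + 1) le_rfl
    rw [countBelow_succ] at this ⊢
    split_ifs at this ⊢ <;> omega

lemma countBelow_eq_card_fin (n : ℕ) : countBelow u ω n = #{i : Fin n | ω i = u} := by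
  rw [countBelow, card_filter, card_filter,
    Fin.sum_univ_eq_sum_range (fun i => if ω i = u then 1 else 0)]

end countBelow

def SNBHit (s t : ℕ) (ω : ℕ → Bool) (n : ℕ) : Prop :=
  countBelow true ω n = s ∨ countBelow false ω n = t

section snbStop

variable {s t : ℕ} {ω : ℕ → Bool}

lemma exists_snbHit (s t : ℕ) (ω : ℕ → Bool) : ∃ n, SNBHit s t ω n := by
  by_contra! h
  have hs' := countBelow_lt_of_forall_ne true ω (n := s + t) fun j _ => (not_or.1 (h j)).1
  have ht' := countBelow_lt_of_forall_ne false ω (n := s + t) fun j _ => (not_or.1 (h j)).2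
  have := countBelow_true_add_false ω (s + t)
  omega

lemma snbStop_eq_iff {k : ℕ} :
    snbStop s t ω = k ↔ SNBHit s t ω k ∧ ∀ j < k, ¬SNBHit s t ω j := by
  classical
  change sInf {n | SNBHit s t ω n} = k ↔ _
  rw [Nat.sInf_def (show {n | SNBHit s t ω n}.Nonempty from exists_snbHit s t ω)]
  exact Nat.find_eq_iff _

lemma snbHit_congr {ω' : ℕ → Bool} {n : ℕ} (h : ∀ i < n, ω i = ω' i) :
    SNBHit s t ω n ↔ SNBHit s t ω' n := by
  rw [SNBHit, SNBHit, countBelow_congr true ω h, countBelow_congr false ω h]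

lemma snbStop_dependsOn (s t k : ℕ) :
    DependsOn (· ∈ {ω : ℕ → Bool | snbStop s t ω = k}) (Set.Iio k) := by
  intro ω ω' h
  have hj : ∀ j ≤ k, SNBHit s t ω j ↔ SNBHit s t ω' j :=
    fun j hj => snbHit_congr fun i hi => h i (by simp; omega)
  simp only [Set.mem_ofPred_eq, snbStop_eq_iff, eq_iff_iff]
  exact and_congr (hj k le_rfl) (forall₂_congr fun j hjk => not_congr (hj j hjk.le))

lemma forall_not_snbHit_iff {k : ℕ} :
    (∀ j ≤ k, ¬SNBHit s t ω j) ↔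
      countBelow true ω k < s ∧ countBelow false ω k < t := by
  refine ⟨fun h => ⟨countBelow_lt_of_forall_ne true ω fun j hj => (not_or.1 (h j hj)).1,
    countBelow_lt_of_forall_ne false ω fun j hj => (not_or.1 (h j hj)).2⟩, ?_⟩
  rintro ⟨hk_true, hk_false⟩ j hj (hit | hit)
  · exact absurd (countBelow_mono true ω hj) (by omega)
  · exact absurd (countBelow_mono false ω hj) (by omega)

lemma snbStop_eq_succ_iff (hs : 0 < s) (ht : 0 < t) {k : ℕ} :
    snbStop s t ω = k + 1 ↔ k + 1 < s + t ∧
      ((countBelow true ω k = s - 1 ∧ ω k = true) ∨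
        (countBelow false ω k = t - 1 ∧ ω k = false)) := by
  simp only [snbStop_eq_iff, Nat.lt_succ_iff, forall_not_snbHit_iff]
  simp only [SNBHit, countBelow_succ]
  have := countBelow_true_add_false ω k
  cases ω k <;> simp <;> omega

lemma snbStop_add_eq_iff {s' t' m : ℕ} (hs' : s' < s) (ht' : t' < t)
    (h_true : countBelow true ω m = s') (h_false : countBelow false ω m = t') {k : ℕ} :
    snbStop s t ω = m + k ↔ snbStop (s - s') (t - t') (fun j => ω (m + j)) = k := by
  have h_shift (j : ℕ) :
      SNBHit s t ω (m + j) ↔ SNBHit (s - s') (t - t') (fun j => ω (m + j)) j := by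
    simp only [SNBHit, countBelow_add, h_true, h_false]
    omega
  have h_before : ∀ j ≤ m, ¬SNBHit s t ω j :=
    forall_not_snbHit_iff.2 ⟨h_true ▸ hs', h_false ▸ ht'⟩
  rw [snbStop_eq_iff, snbStop_eq_iff, h_shift]
  refine and_congr_right fun _ =>
    ⟨fun h j hj => (h_shift j).not.1 (h _ (by omega)), fun h j hj => ?_⟩
  rcases lt_or_ge j m with hjm | hjm
  · exact h_before j hjm.le
  · obtain ⟨i, rfl⟩ := Nat.exists_eq_add_of_le hjm
    exact (h_shift i).not.2 (h i (by omega))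

end snbStop

section IIDProduct

variable {α : Type*}

def initSeg (n : ℕ) (ω : ℕ → α) : Fin n → α := fun i => ω i

lemma initSeg_add (m k : ℕ) (ω : ℕ → α) :
    initSeg (m + k) ω = Fin.append (initSeg m ω) (initSeg k fun j => ω (m + j)) := by
  funext i
  refine Fin.addCases (fun i => ?_) (fun j => ?_) i
  · simp [initSeg]
  · simp [initSeg]

lemma exists_finset_of_dependsOn [Fintype α] {n : ℕ} {E : Set (ℕ → α)}
    (hE : DependsOn (· ∈ E) (Set.Iio n)) :
    ∃ S : Finset (Fin n → α), E = initSeg n ⁻¹' S := by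
  classical
  refine ⟨univ.filter fun b => ∃ ω ∈ E, initSeg n ω = b, Set.ext fun ω => ?_⟩
  simp only [Set.mem_preimage, coe_filter, mem_univ, true_and, Set.mem_ofPred_eq]
  refine ⟨fun hω => ⟨ω, hω, rfl⟩, fun ⟨ω', hω', h⟩ => ?_⟩
  exact cast (hE fun i hi => congrFun h ⟨i, hi⟩) hω'

variable [MeasurableSpace α]

lemma measurable_initSeg (n : ℕ) : Measurable (initSeg (α := α) n) :=
  measurable_pi_lambda _ fun _ => measurable_pi_apply _

def IsIIDProduct (w : α → ℝ≥0∞) (μ : Measure (ℕ → α)) : Prop :=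
  ∀ (n : ℕ) (b : Fin n → α), μ {ω | ∀ i : Fin n, ω i = b i} = ∏ i, w (b i)

variable [MeasurableSingletonClass α] {w : α → ℝ≥0∞} {μ : Measure (ℕ → α)}

lemma IsIIDProduct.measure_initSeg_preimage (hμ : IsIIDProduct w μ) {n : ℕ}
    (S : Finset (Fin n → α)) : μ (initSeg n ⁻¹' S) = ∑ b ∈ S, ∏ i, w (b i) := by
  rw [← Measure.map_apply (measurable_initSeg n) S.measurableSet, ← sum_measure_singleton]
  refine sum_congr rfl fun b _ => ?_
  rw [Measure.map_apply (measurable_initSeg n) (measurableSet_singleton b), ← hμ n b]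
  congr 1
  ext ω
  simp [initSeg, funext_iff]

variable [Fintype α]

lemma measurableSet_of_dependsOn {n : ℕ} {E : Set (ℕ → α)}
    (hE : DependsOn (· ∈ E) (Set.Iio n)) :
    MeasurableSet E := by
  obtain ⟨S, rfl⟩ := exists_finset_of_dependsOn hE
  exact measurable_initSeg n S.measurableSet

theorem IsIIDProduct.measure_inter_shift_preimage (hμ : IsIIDProduct w μ) {m k : ℕ}
    {E F : Set (ℕ → α)} (hE : DependsOn (· ∈ E) (Set.Iio m))
    (hF : DependsOn (· ∈ F) (Set.Iio k)) :
    μ (E ∩ (fun ω j => ω (m + j)) ⁻¹' F) = μ E * μ F := by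
  classical
  obtain ⟨S, rfl⟩ := exists_finset_of_dependsOn hE
  obtain ⟨W, rfl⟩ := exists_finset_of_dependsOn hF
  have h_cyl : initSeg m ⁻¹' S ∩ (fun ω j => ω (m + j)) ⁻¹' (initSeg k ⁻¹' W) =
      initSeg (m + k) ⁻¹'
        ((S ×ˢ W).map (Fin.appendEquiv m k).toEmbedding : Set (Fin (m + k) → α)) := by
    ext ω
    simp [initSeg_add, Set.mem_preimage]
  rw [h_cyl, hμ.measure_initSeg_preimage, hμ.measure_initSeg_preimage,
    hμ.measure_initSeg_preimage, sum_map, sum_mul_sum, ← sum_product']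
  refine sum_congr rfl fun ⟨a, b⟩ _ => ?_
  simp [Fin.prod_univ_add]

end IIDProduct

section Bernoulli

lemma prod_bool_eq_pow_mul_pow {M : Type*} [CommMonoid M] (w : Bool → M) (u : Bool) {n : ℕ}
    (b : Fin n → Bool) :
    ∏ i, w (b i) = w u ^ #{i | b i = u} * w (!u) ^ (n - #{i | b i = u}) := by
  rw [← prod_filter_mul_prod_filter_not univ (fun i => b i = u)]
  congr 1
  · rw [prod_congr rfl fun i hi => by rw [(mem_filter.1 hi).2], prod_const]
  · rw [prod_congr rfl fun i hi => by rw [Bool.eq_not_iff.2 (mem_filter.1 hi).2], prod_const,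
      filter_not, card_sdiff_of_subset (filter_subset _ _), card_univ, Fintype.card_fin]

lemma card_filter_count_eq (u : Bool) (n c : ℕ) :
    #{b : Fin n → Bool | #{i | b i = u} = c} = n.choose c := by
  rw [show n.choose c = #(powersetCard c (univ : Finset (Fin n))) by simp]
  refine card_nbij' (fun b => ({i | b i = u} : Finset (Fin n)))
    (fun S i => if i ∈ S then u else !u) ?_ ?_ ?_ ?_
  · intro b hb
    simpa using hb
  · intro S hS
    rw [mem_coe, mem_powersetCard] at hS
    simpa [apply_ite (· = u)] using hS.2
  · intro b _
    funext i
    cases hb : b i <;> cases u <;> simp [hb]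
  · intro S _
    ext i
    by_cases hi : i ∈ S <;> simp [hi]

variable {w : Bool → ℝ≥0∞} {μ : Measure (ℕ → Bool)}

lemma countBelow_dependsOn (u : Bool) (n c : ℕ) :
    DependsOn (· ∈ {ω : ℕ → Bool | countBelow u ω n = c}) (Set.Iio n) := by
  intro ω ω' h
  simp only [Set.mem_ofPred_eq, countBelow_congr u ω fun i hi => h i hi]

theorem IsIIDProduct.measure_countBelow_eq (hμ : IsIIDProduct w μ) (u : Bool) (n c : ℕ) :
    μ {ω | countBelow u ω n = c} = n.choose c * w u ^ c * w (!u) ^ (n - c) := by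
  have h_cyl : {ω | countBelow u ω n = c} =
      initSeg n ⁻¹' ({b : Fin n → Bool | #{i | b i = u} = c} : Finset _) := by
    ext ω
    simp only [Set.mem_ofPred_eq, Set.mem_preimage, coe_filter, mem_univ, true_and,
      countBelow_eq_card_fin]
    rfl
  rw [h_cyl, hμ.measure_initSeg_preimage,
    sum_congr rfl fun b hb => by rw [prod_bool_eq_pow_mul_pow w u b, (mem_filter.1 hb).2],
    sum_const, card_filter_count_eq, nsmul_eq_mul, mul_assoc]

theorem IsIIDProduct.measure_countBelow_eq_and_eq (hμ : IsIIDProduct w μ) (u : Bool) (k c : ℕ) :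
    μ {ω | countBelow u ω k = c ∧ ω k = u} =
      k.choose c * w u ^ (c + 1) * w (!u) ^ (k - c) := by
  have h_first : μ {ω | ω 0 = u} = w u := by
    simpa [Fin.forall_fin_one] using hμ 1 fun _ => u
  have h_dep : DependsOn (· ∈ {ω : ℕ → Bool | ω 0 = u}) (Set.Iio 1) :=
    fun ω ω' h => by simp [h 0 (by simp)]
  rw [show {ω | countBelow u ω k = c ∧ ω k = u} =
      {ω | countBelow u ω k = c} ∩ (fun ω j => ω (k + j)) ⁻¹' {ω | ω 0 = u} from rfl,
    hμ.measure_inter_shift_preimage (countBelow_dependsOn u k c) h_dep,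
    hμ.measure_countBelow_eq, h_first]
  ring

variable {s t : ℕ}

theorem IsIIDProduct.measure_snbStop_eq_succ (hμ : IsIIDProduct w μ) (hs : 0 < s) (ht : 0 < t)
    (k : ℕ) :
    μ {ω | snbStop s t ω = k + 1} =
      if k + 1 < s + t then
        k.choose (s - 1) * w true ^ s * w false ^ (k + 1 - s) +
          k.choose (t - 1) * w false ^ t * w true ^ (k + 1 - t)
      else 0 := by
  split_ifs with hk
  · have h_split : {ω | snbStop s t ω = k + 1} =
        {ω | countBelow true ω k = s - 1 ∧ ω k = true} ∪
          {ω | countBelow false ω k = t - 1 ∧ ω k = false} := by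
      ext ω
      simp [snbStop_eq_succ_iff hs ht, hk]
    have h_meas :
        MeasurableSet {ω : ℕ → Bool | countBelow false ω k = t - 1 ∧ ω k = false} :=
      (measurableSet_of_dependsOn (countBelow_dependsOn false k (t - 1))).inter
        ((measurableSet_singleton false).preimage (measurable_pi_apply k))
    rw [h_split, measure_union (by simp +contextual [Set.disjoint_left]) h_meas,
      hμ.measure_countBelow_eq_and_eq, hμ.measure_countBelow_eq_and_eq, Nat.sub_add_cancel hs,
      Nat.sub_add_cancel ht, show k - (s - 1) = k + 1 - s by omega,
      show k - (t - 1) = k + 1 - t by omega, Bool.not_true, Bool.not_false]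
  · simp [snbStop_eq_succ_iff hs ht, hk]

end Bernoulli

def snbPMF (p : ℝ) (s t k : ℕ) : ℝ :=
  (if s ≤ k ∧ k ≤ s + t - 1 then (k - 1).choose (s - 1) * p ^ s * (1 - p) ^ (k - s) else 0) +
    (if t ≤ k ∧ k ≤ s + t - 1 then (k - 1).choose (t - 1) * p ^ (k - t) * (1 - p) ^ t else 0)

lemma ite_le_succ_and_choose_mul {a k : ℕ} {P : Prop} [Decidable P] (x y : ℝ) :
    (if a ≤ k + 1 ∧ P then (k.choose (a - 1) : ℝ) * x * y else 0) =
      if P then (k.choose (a - 1) : ℝ) * x * y else 0 := by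
  by_cases ha : a ≤ k + 1
  · simp [ha]
  · simp [ha, Nat.choose_eq_zero_of_lt (show k < a - 1 by omega)]

lemma snbPMF_succ (p : ℝ) (s t k : ℕ) :
    snbPMF p s t (k + 1) =
      if k + 1 < s + t then
        k.choose (s - 1) * p ^ s * (1 - p) ^ (k + 1 - s) +
          k.choose (t - 1) * (1 - p) ^ t * p ^ (k + 1 - t)
      else 0 := by
  rw [snbPMF, add_tsub_cancel_right, ite_le_succ_and_choose_mul, ite_le_succ_and_choose_mul]
  simp only [show k + 1 ≤ s + t - 1 ↔ k + 1 < s + t by omega]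
  split_ifs
  · ring
  · simp

theorem IsIIDProduct.measure_snbStop_eq {p : ℝ} {μ : Measure (ℕ → Bool)}
    (hμ : IsIIDProduct (fun u : Bool => ENNReal.ofReal (if u then p else 1 - p)) μ)
    (hp0 : 0 ≤ p) (hp1 : p ≤ 1) {s t : ℕ} (hs : 0 < s) (ht : 0 < t) (k : ℕ) :
    μ {ω | snbStop s t ω = k} = ENNReal.ofReal (snbPMF p s t k) := by
  rcases k with _ | k
  · have h_empty : {ω | snbStop s t ω = 0} = ∅ := by
      ext ω
      simp only [Set.mem_ofPred_eq, snbStop_eq_iff, SNBHit, countBelow_zero,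
        Set.mem_empty_iff_false, iff_false]
      omega
    simp [h_empty, snbPMF, hs.ne', ht.ne']
  have hq0 : 0 ≤ 1 - p := sub_nonneg.2 hp1
  rw [hμ.measure_snbStop_eq_succ hs ht, snbPMF_succ]
  by_cases hk : k + 1 < s + t
  · simp only [if_pos hk, if_true, Bool.false_eq_true, if_false]
    rw [ENNReal.ofReal_add (by positivity) (by positivity)]
    repeat rw [ENNReal.ofReal_mul (by positivity)]
    simp only [ENNReal.ofReal_pow hp0, ENNReal.ofReal_pow hq0, ENNReal.ofReal_natCast]
  · simp [hk]

theorem snb_stoppingTime_conditional_general (p : ℝ) (hp0 : 0 ≤ p) (hp1 : p ≤ 1)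
    (s t : ℕ)
    (s' t' m : ℕ) (hs' : s' < s) (ht' : t' < t) (hm : m = s' + t')
    (μ : Measure (ℕ → Bool)) [IsProbabilityMeasure μ]
    (hμ : ∀ (n : ℕ) (b : Fin n → Bool),
      μ {ω | ∀ i : Fin n, ω (i : ℕ) = b i} =
        ∏ i : Fin n, ENNReal.ofReal (if b i then p else 1 - p))
    (A : Set (ℕ → Bool)) (hA : A = {ω | numSuccesses ω m = s'}) (hA0 : μ A ≠ 0)
    (k : ℕ) :
    μ[|A] {ω | snbStop s t ω = m + k} =
      ENNReal.ofReal
        ((if s - s' ≤ k ∧ k ≤ (s - s') + (t - t') - 1 then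
            (Nat.choose (k - 1) (s - s' - 1) : ℝ) * p ^ (s - s') *
              (1 - p) ^ (k - (s - s')) else 0) +
         (if t - t' ≤ k ∧ k ≤ (s - s') + (t - t') - 1 then
            (Nat.choose (k - 1) (t - t' - 1) : ℝ) * p ^ (k - (t - t')) *
              (1 - p) ^ (t - t') else 0)) := by
  have hμ' : IsIIDProduct (fun u : Bool => ENNReal.ofReal (if u then p else 1 - p)) μ := hμ
  have hA_dep : DependsOn (· ∈ A) (Set.Iio m) := hA ▸ countBelow_dependsOn true m s'
  have h_event : A ∩ {ω | snbStop s t ω = m + k} =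
      A ∩ (fun ω j => ω (m + j)) ⁻¹' {ω | snbStop (s - s') (t - t') ω = k} := by
    ext ω
    refine and_congr_right fun hω => ?_
    have h_true : countBelow true ω m = s' := by rwa [hA] at hω
    have h_false : countBelow false ω m = t' := by
      have := countBelow_true_add_false ω m
      omega
    exact snbStop_add_eq_iff hs' ht' h_true h_false
  rw [cond_apply (measurableSet_of_dependsOn hA_dep), h_event,
    hμ'.measure_inter_shift_preimage hA_dep (snbStop_dependsOn _ _ k), ← mul_assoc,
    ENNReal.inv_mul_cancel hA0 (measure_ne_top μ A), one_mul]
  exact hμ'.measure_snbStop_eq hp0 hp1 (by omega) (by omega) k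

/-- Let `μ` be the infinite product of Bernoulli(p) measures on sequences
`ω : ℕ → {0,1}` (characterized by its values on cylinder sets).  Conditionally on
the event `A` that exactly `s'` of the first `m = s' + t'` coordinates equal 1
(hence exactly `t'` equal 0), the additional number of coordinates
`Y - m` needed to reach `s` successes or `t` failures is distributed as
SNB(p, s - s', t - t'). -/
theorem snb_stoppingTime_conditional (p : ℝ) (hp0 : 0 ≤ p) (hp1 : p ≤ 1)
    (s t : ℕ) (hs : 0 < s) (ht : 0 < t)
    (s' t' m : ℕ) (hs' : s' < s) (ht' : t' < t) (hm : m = s' + t')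
    (μ : Measure (ℕ → Bool)) [IsProbabilityMeasure μ]
    (hμ : ∀ (n : ℕ) (b : Fin n → Bool),
      μ {ω | ∀ i : Fin n, ω (i : ℕ) = b i} =
        ∏ i : Fin n, ENNReal.ofReal (if b i then p else 1 - p))
    (A : Set (ℕ → Bool)) (hA : A = {ω | numSuccesses ω m = s'}) (hA0 : μ A ≠ 0)
    (k : ℕ) :
    μ[|A] {ω | snbStop s t ω = m + k} =
      ENNReal.ofReal
        ((if s - s' ≤ k ∧ k ≤ (s - s') + (t - t') - 1 then
            (Nat.choose (k - 1) (s - s' - 1) : ℝ) * p ^ (s - s') *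
              (1 - p) ^ (k - (s - s')) else 0) +
         (if t - t' ≤ k ∧ k ≤ (s - s') + (t - t') - 1 then
            (Nat.choose (k - 1) (t - t' - 1) : ℝ) * p ^ (k - (t - t')) *
              (1 - p) ^ (t - t') else 0)) :=
  snb_stoppingTime_conditional_general p hp0 hp1 s t s' t' m hs' ht' hm μ hμ A hA hA0 k
end

section
/- Let 0 < p < 1, q = 1 - p, let s, t be positive integers, and let x be a real number with x < min(log(1/p), log(1/q)). Then the moment generating function of SNB(p, s, t) satisfies ∑_{k=s}^{s+t-1} C(k-1, s-1) p^s q^{k-s} e^{kx} + ∑_{k=t}^{s+t-1} C(k-1, t-1) p^{k-t} q^t e^{kx} = (p e^x/(1 - q e^x))^s · ∑_{j=s}^{s+t-1} C(s+t-1, j) (1 - q e^x)^j (q e^x)^{s+t-1-j} + (q e^x/(1 - p e^x))^t · ∑_{j=t}^{s+t-1} C(s+t-1, j) (1 - p e^x)^j (p e^x)^{s+t-1-j}. -/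
/-!
After writing `e^{kx} = e^{sx} e^{(k-s)x}`, each half of the mass function is a negative
binomial sum with success weight `a = p e^x` and failure weight `b = q e^x` (roles exchanged
in the second half). Rescaling the
success weight to `1 - b`, so that the two weights sum to one, the sum becomes the probability
that the `s`-th success occurs by trial `N = s + t - 1`, i.e. that `N` trials contain at least
`s` successes: a binomial tail. That identity holds in any commutative ring with `a + b = 1`
and follows by induction on `N` from Pascal's rule.
-/

open Finset

section BinomialTail

variable {R : Type*} [CommRing R] {a b : R}

theorem sum_Icc_choose_mul_pow_succ (hab : a + b = 1) {m N : ℕ} (hmN : m ≤ N) :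
    ∑ j ∈ Icc (m + 1) (N + 1), ((N + 1).choose j : R) * a ^ j * b ^ (N + 1 - j) =
      ∑ j ∈ Icc (m + 1) N, (N.choose j : R) * a ^ j * b ^ (N - j) +
        N.choose m * a ^ (m + 1) * b ^ (N - m) := by
  set T := ∑ j ∈ Icc (m + 1) N, (N.choose j : R) * a ^ j * b ^ (N - j)
  have hkeep : ∑ j ∈ Icc (m + 1) (N + 1), (N.choose j : R) * a ^ j * b ^ (N + 1 - j) = b * T := by
    rw [sum_Icc_succ_top (by omega), Nat.choose_succ_self, mul_sum]
    simp only [Nat.cast_zero, zero_mul, add_zero]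
    refine sum_congr rfl fun j hj => ?_
    rw [show N + 1 - j = N - j + 1 by grind, pow_succ]
    ring
  have hshift : ∑ j ∈ Icc (m + 1) (N + 1), (N.choose (j - 1) : R) * a ^ j * b ^ (N + 1 - j) =
      a * (N.choose m * a ^ m * b ^ (N - m) + T) := by
    rw [← map_add_right_Icc m N 1, sum_map, Icc_eq_cons_Ioc hmN, sum_cons,
      ← Icc_add_one_left_eq_Ioc, mul_add, mul_sum]
    simp only [addRightEmbedding_apply, Nat.add_sub_cancel, Nat.add_sub_add_right]
    congr 1
    · ring
    · exact sum_congr rfl fun j _ => by ring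
  calc _ = ∑ j ∈ Icc (m + 1) (N + 1), ((N.choose j : R) * a ^ j * b ^ (N + 1 - j) +
        (N.choose (j - 1) : R) * a ^ j * b ^ (N + 1 - j)) := by
        refine sum_congr rfl fun j hj => ?_
        obtain ⟨i, rfl⟩ : ∃ i, j = i + 1 := ⟨j - 1, by grind⟩
        rw [Nat.choose_succ_succ', Nat.add_sub_cancel]
        push_cast
        ring
    _ = _ := by
        rw [sum_add_distrib, hkeep, hshift]
        linear_combination T * hab

theorem sum_Icc_choose_pred_mul_pow_eq_binomial_tail (hab : a + b = 1) (m N : ℕ) :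
    ∑ k ∈ Icc (m + 1) N, ((k - 1).choose m : R) * a ^ (m + 1) * b ^ (k - (m + 1)) =
      ∑ j ∈ Icc (m + 1) N, (N.choose j : R) * a ^ j * b ^ (N - j) := by
  induction N with
  | zero => simp
  | succ N ih =>
    rcases lt_or_ge N m with hNm | hmN
    · simp [Icc_eq_empty_of_lt (show N + 1 < m + 1 by omega)]
    · rw [sum_Icc_succ_top (by omega), ih, sum_Icc_choose_mul_pow_succ hab hmN,
        Nat.add_sub_cancel, Nat.add_sub_add_right]

end BinomialTail

theorem sum_Icc_choose_pred_mul_pow_eq_div_pow_mul_binomial_tail {K : Type*} [Field K]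
    (c r : K) (hr : 1 - r ≠ 0) {s : ℕ} (hs : 0 < s) (N : ℕ) :
    ∑ k ∈ Icc s N, ((k - 1).choose (s - 1) : K) * c ^ s * r ^ (k - s) =
      (c / (1 - r)) ^ s * ∑ j ∈ Icc s N, (N.choose j : K) * (1 - r) ^ j * r ^ (N - j) := by
  obtain ⟨m, rfl⟩ : ∃ m, s = m + 1 := ⟨s - 1, by omega⟩
  rw [← sum_Icc_choose_pred_mul_pow_eq_binomial_tail (sub_add_cancel 1 r), mul_sum]
  refine sum_congr rfl fun k _ => ?_
  rw [Nat.add_sub_cancel, div_pow]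
  field_simp

theorem Real.mul_exp_lt_one_of_lt_log_inv {a x : ℝ} (h : x < Real.log (1 / a)) :
    a * Real.exp x < 1 := by
  rcases le_or_gt a 0 with ha | ha
  · nlinarith [Real.exp_pos x]
  · have := Real.exp_lt_exp.mpr h
    rw [Real.exp_log (by positivity)] at this
    rwa [lt_div_iff₀' ha] at this

theorem snb_mgf_general (p q : ℝ)
    (s t : ℕ) (hs : 0 < s) (ht : 0 < t)
    (x : ℝ) (hx : x < min (Real.log (1 / p)) (Real.log (1 / q))) :
    (∑ k ∈ Finset.Icc s (s + t - 1),
        (Nat.choose (k - 1) (s - 1) : ℝ) * p ^ s * q ^ (k - s) * Real.exp (k * x)) +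
    (∑ k ∈ Finset.Icc t (s + t - 1),
        (Nat.choose (k - 1) (t - 1) : ℝ) * p ^ (k - t) * q ^ t * Real.exp (k * x)) =
    (p * Real.exp x / (1 - q * Real.exp x)) ^ s *
      (∑ j ∈ Finset.Icc s (s + t - 1),
        (Nat.choose (s + t - 1) j : ℝ) * (1 - q * Real.exp x) ^ j *
          (q * Real.exp x) ^ (s + t - 1 - j)) +
    (q * Real.exp x / (1 - p * Real.exp x)) ^ t *
      (∑ j ∈ Finset.Icc t (s + t - 1),
        (Nat.choose (s + t - 1) j : ℝ) * (1 - p * Real.exp x) ^ j *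
          (p * Real.exp x) ^ (s + t - 1 - j)) := by
  have hpE : 1 - p * Real.exp x ≠ 0 :=
    (sub_pos.mpr (Real.mul_exp_lt_one_of_lt_log_inv (hx.trans_le (min_le_left _ _)))).ne'
  have hqE : 1 - q * Real.exp x ≠ 0 :=
    (sub_pos.mpr (Real.mul_exp_lt_one_of_lt_log_inv (hx.trans_le (min_le_right _ _)))).ne'
  rw [← sum_Icc_choose_pred_mul_pow_eq_div_pow_mul_binomial_tail _ _ hqE hs,
    ← sum_Icc_choose_pred_mul_pow_eq_div_pow_mul_binomial_tail _ _ hpE ht]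
  have hsplit : ∀ {n k : ℕ}, n ≤ k → Real.exp (k * x) = Real.exp x ^ n * Real.exp x ^ (k - n) :=
    fun h => by rw [← pow_add, Nat.add_sub_cancel' h, Real.exp_nat_mul]
  congr 1 <;> exact sum_congr rfl fun k hk => by rw [hsplit (mem_Icc.mp hk).1]; ring

/-- The moment generating function of the SNB(p, s, t) distribution. -/
theorem snb_mgf (p q : ℝ) (hp0 : 0 < p) (hp1 : p < 1) (hq : q = 1 - p)
    (s t : ℕ) (hs : 0 < s) (ht : 0 < t)
    (x : ℝ) (hx : x < min (Real.log (1 / p)) (Real.log (1 / q))) :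
    (∑ k ∈ Finset.Icc s (s + t - 1),
        (Nat.choose (k - 1) (s - 1) : ℝ) * p ^ s * q ^ (k - s) * Real.exp (k * x)) +
    (∑ k ∈ Finset.Icc t (s + t - 1),
        (Nat.choose (k - 1) (t - 1) : ℝ) * p ^ (k - t) * q ^ t * Real.exp (k * x)) =
    (p * Real.exp x / (1 - q * Real.exp x)) ^ s *
      (∑ j ∈ Finset.Icc s (s + t - 1),
        (Nat.choose (s + t - 1) j : ℝ) * (1 - q * Real.exp x) ^ j *
          (q * Real.exp x) ^ (s + t - 1 - j)) +
    (q * Real.exp x / (1 - p * Real.exp x)) ^ t *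
      (∑ j ∈ Finset.Icc t (s + t - 1),
        (Nat.choose (s + t - 1) j : ℝ) * (1 - p * Real.exp x) ^ j *
          (p * Real.exp x) ^ (s + t - 1 - j)) :=
  snb_mgf_general p q s t hs ht x hx
end

section
/- Let 0 < p < 1, q = 1 - p, let s be a positive integer, and let x be a real number with x < min(log(1/p), log(1/q)). Then the moment generating function of SNB(p, s, t) converges to that of the negative binomial as t → ∞: lim_{t→∞} ( ∑_{k=s}^{s+t-1} C(k-1, s-1) p^s q^{k-s} e^{kx} + ∑_{k=t}^{s+t-1} C(k-1, t-1) p^{k-t} q^t e^{kx} ) = (p e^x / (1 - q e^x))^s. -/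
/-!
Substituting `k = s + j`, the first sum is `(p eˣ)ˢ` times the `t`-th partial sum of the negative
binomial series `∑ⱼ C(j + s - 1, s - 1) (q eˣ)ʲ = (1 - q eˣ)⁻ˢ`. The second sum has only `s` terms,
each at most `(t + s)ˢ (q eˣ)ᵗ` because `p eˣ ≤ 1`, so it tends to `0` since `q eˣ < 1`.
-/

open Filter Topology Finset

lemma mul_exp_lt_one_of_lt_log_one_div {a x : ℝ} (ha : 0 < a) (hx : x < Real.log (1 / a)) :
    a * Real.exp x < 1 := by
  rwa [Real.lt_log_iff_exp_lt (by positivity), lt_div_iff₀' ha] at hx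

lemma tendsto_add_pow_mul_pow_of_abs_lt_one (k c : ℕ) {r : ℝ} (hr : |r| < 1) (hr0 : r ≠ 0) :
    Tendsto (fun n : ℕ ↦ ((n : ℝ) + c) ^ k * r ^ n) atTop (𝓝 0) := by
  have h := ((tendsto_pow_const_mul_const_pow_of_abs_lt_one k hr).comp
    (tendsto_add_atTop_nat c)).const_mul (r ^ c)⁻¹
  rw [mul_zero] at h
  refine h.congr fun n ↦ ?_
  simp only [Function.comp_apply, Nat.cast_add, pow_add]
  field_simp

section

variable (p q x : ℝ) (s : ℕ)

lemma sum_Icc_choose_mul_pow_mul_exp_eq (hs : 0 < s) (t : ℕ) :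
    ∑ k ∈ Icc s (s + t - 1),
        (Nat.choose (k - 1) (s - 1) : ℝ) * p ^ s * q ^ (k - s) * Real.exp (k * x) =
      (p * Real.exp x) ^ s *
        ∑ j ∈ range t, (Nat.choose (j + (s - 1)) (s - 1) : ℝ) * (q * Real.exp x) ^ j := by
  rw [mul_sum, ← Ico_add_one_right_eq_Icc, show s + t - 1 + 1 = s + t by omega,
    sum_Ico_eq_sum_range, Nat.add_sub_cancel_left]
  refine sum_congr rfl fun j _ ↦ ?_
  rw [show s + j - 1 = j + (s - 1) by omega, Nat.add_sub_cancel_left]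
  push_cast
  rw [add_mul, Real.exp_add, Real.exp_nat_mul, Real.exp_nat_mul]
  ring

lemma tendsto_sum_Icc_choose_mul_pow_mul_exp (hs : 0 < s) (hr : ‖q * Real.exp x‖ < 1) :
    Tendsto (fun t : ℕ ↦ ∑ k ∈ Icc s (s + t - 1),
        (Nat.choose (k - 1) (s - 1) : ℝ) * p ^ s * q ^ (k - s) * Real.exp (k * x))
      atTop (𝓝 ((p * Real.exp x / (1 - q * Real.exp x)) ^ s)) := by
  have h := (hasSum_choose_mul_geometric_of_norm_lt_one (s - 1) hr).tendsto_sum_nat.const_mul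
    ((p * Real.exp x) ^ s)
  rw [Nat.sub_add_cancel hs, ← div_eq_mul_one_div, ← div_pow] at h
  simpa only [sum_Icc_choose_mul_pow_mul_exp_eq p q x s hs] using h

lemma sum_Icc_choose_mul_pow_mul_exp_le (hp : 0 ≤ p) (hq : 0 ≤ q) (hP : p * Real.exp x ≤ 1)
    {t : ℕ} (ht : 0 < t) :
    ∑ k ∈ Icc t (s + t - 1),
        (Nat.choose (k - 1) (t - 1) : ℝ) * p ^ (k - t) * q ^ t * Real.exp (k * x) ≤
      s * (((t : ℝ) + s) ^ s * (q * Real.exp x) ^ t) := by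
  have hterm : ∀ k ∈ Icc t (s + t - 1),
      (Nat.choose (k - 1) (t - 1) : ℝ) * p ^ (k - t) * q ^ t * Real.exp (k * x) ≤
        ((t : ℝ) + s) ^ s * (q * Real.exp x) ^ t := by
    intro k hk
    obtain ⟨j, rfl⟩ : ∃ j, k = t + j := ⟨k - t, by grind⟩
    have hj : j < s := by grind
    have hchoose : Nat.choose (t + j - 1) (t - 1) ≤ (t + s) ^ s := by
      rw [Nat.choose_symm_of_eq_add (show t + j - 1 = t - 1 + j by omega)]
      calc Nat.choose (t + j - 1) j ≤ (t + j - 1) ^ j := Nat.choose_le_pow _ _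
        _ ≤ (t + s) ^ j := Nat.pow_le_pow_left (by omega) _
        _ ≤ (t + s) ^ s := Nat.pow_le_pow_right (by omega) hj.le
    have hrest : p ^ (t + j - t) * q ^ t * Real.exp ((t + j : ℕ) * x) ≤ (q * Real.exp x) ^ t := by
      rw [Real.exp_nat_mul, Nat.add_sub_cancel_left, pow_add]
      calc p ^ j * q ^ t * (Real.exp x ^ t * Real.exp x ^ j)
          = (p * Real.exp x) ^ j * (q * Real.exp x) ^ t := by ring
        _ ≤ (q * Real.exp x) ^ t :=
          mul_le_of_le_one_left (by positivity) (pow_le_one₀ (by positivity) hP)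
    rw [mul_assoc, mul_assoc, ← mul_assoc (p ^ _)]
    exact mul_le_mul (by exact_mod_cast hchoose) hrest (by positivity) (by positivity)
  calc _ ≤ #(Icc t (s + t - 1)) • (((t : ℝ) + s) ^ s * (q * Real.exp x) ^ t) :=
        sum_le_card_nsmul _ _ _ hterm
    _ = _ := by rw [Nat.card_Icc, show s + t - 1 + 1 - t = s by omega, nsmul_eq_mul]

lemma tendsto_sum_Icc_choose_mul_pow_mul_exp_zero (hp : 0 ≤ p) (hq : 0 < q)
    (hP : p * Real.exp x ≤ 1) (hr : q * Real.exp x < 1) :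
    Tendsto (fun t : ℕ ↦ ∑ k ∈ Icc t (s + t - 1),
        (Nat.choose (k - 1) (t - 1) : ℝ) * p ^ (k - t) * q ^ t * Real.exp (k * x))
      atTop (𝓝 0) := by
  have hr0 : 0 < q * Real.exp x := by positivity
  have hbound := (tendsto_add_pow_mul_pow_of_abs_lt_one s s
    (by rwa [abs_of_pos hr0]) hr0.ne').const_mul (s : ℝ)
  rw [mul_zero] at hbound
  refine squeeze_zero' (Eventually.of_forall fun t ↦ sum_nonneg fun k _ ↦ by positivity) ?_ hbound
  filter_upwards [eventually_gt_atTop 0] with t ht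
  exact sum_Icc_choose_mul_pow_mul_exp_le p q x s hp hq.le hP ht

end

/-- As `t → ∞`, the moment generating function of the SNB(p, s, t) distribution
converges to that of the negative binomial distribution. -/
theorem snb_mgf_tendsto_negbinom_mgf (p q : ℝ) (hp0 : 0 < p) (hp1 : p < 1)
    (hq : q = 1 - p) (s : ℕ) (hs : 0 < s)
    (x : ℝ) (hx : x < min (Real.log (1 / p)) (Real.log (1 / q))) :
    Filter.Tendsto
      (fun t : ℕ =>
        (∑ k ∈ Finset.Icc s (s + t - 1),
          (Nat.choose (k - 1) (s - 1) : ℝ) * p ^ s * q ^ (k - s) * Real.exp (k * x)) +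
        (∑ k ∈ Finset.Icc t (s + t - 1),
          (Nat.choose (k - 1) (t - 1) : ℝ) * p ^ (k - t) * q ^ t * Real.exp (k * x)))
      Filter.atTop
      (nhds ((p * Real.exp x / (1 - q * Real.exp x)) ^ s)) := by
  have hq0 : 0 < q := by linarith
  have hP : p * Real.exp x < 1 :=
    mul_exp_lt_one_of_lt_log_one_div hp0 (hx.trans_le (min_le_left _ _))
  have hr : q * Real.exp x < 1 :=
    mul_exp_lt_one_of_lt_log_one_div hq0 (hx.trans_le (min_le_right _ _))
  have hr_norm : ‖q * Real.exp x‖ < 1 := by rwa [Real.norm_of_nonneg (by positivity)]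
  simpa only [add_zero] using (tendsto_sum_Icc_choose_mul_pow_mul_exp p q x s hs hr_norm).add
    (tendsto_sum_Icc_choose_mul_pow_mul_exp_zero p q x s hp0.le hq0 hP.le hr)
end
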